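/- Safety properties are closed under binary union: if P₁ and P₂ are safety properties then P₁ ∪ P₂ is a safety property, under the directedness assumption on finite prefixes. -/

import Mathlib

def cls {f ω : Type*} (pre : f → ω → Prop) (P : Set ω) : Set ω :=
  {T | ∀ t, pre t T → ∃ T' ∈ P, pre t T'}

theorem subset_cls {f ω : Type*} (pre : f → ω → Prop) (P : Set ω) : P ⊆ cls pre P :=
  fun T hT _ ht => ⟨T, hT, ht⟩

theorem notMem_cls {f ω : Type*} {pre : f → ω → Prop} {P : Set ω} {T : ω} :
    T ∉ cls pre P ↔ ∃ t, pre t T ∧ ∀ T' ∈ P, ¬ pre t T' := by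
  simp only [cls, Set.mem_ofPred_eq, not_forall, not_exists, not_and, exists_prop]

/-- A prefix of `T` witnessing `T ∉ cls P₁` and one witnessing `T ∉ cls P₂` have a common
extension, which by downward closure witnesses `T ∉ cls (P₁ ∪ P₂)`. -/
theorem cls_union_subset {f ω : Type*} {pre : f → ω → Prop} {le : f → f → Prop}
    (hdown : ∀ t t' : f, ∀ T : ω, le t t' → pre t' T → pre t T)
    (hdir : ∀ t₁ t₂ : f, ∀ T : ω, pre t₁ T → pre t₂ T →
      ∃ t₃, pre t₃ T ∧ le t₁ t₃ ∧ le t₂ t₃)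
    (P₁ P₂ : Set ω) : cls pre (P₁ ∪ P₂) ⊆ cls pre P₁ ∪ cls pre P₂ := by
  intro T hT
  by_contra hnot
  obtain ⟨hT₁, hT₂⟩ := not_or.mp hnot
  obtain ⟨t₁, ht₁, hP₁⟩ := notMem_cls.mp hT₁
  obtain ⟨t₂, ht₂, hP₂⟩ := notMem_cls.mp hT₂
  obtain ⟨t₃, ht₃, hle₁, hle₂⟩ := hdir t₁ t₂ T ht₁ ht₂
  obtain ⟨T', hT' | hT', hpre⟩ := hT t₃ ht₃
  · exact hP₁ T' hT' (hdown t₁ t₃ T' hle₁ hpre)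
  · exact hP₂ T' hT' (hdown t₂ t₃ T' hle₂ hpre)

theorem safety_union {f ω : Type*} (pre : f → ω → Prop) (le : f → f → Prop)
    (hdown : ∀ t t' : f, ∀ T : ω, le t t' → pre t' T → pre t T)
    (hdir : ∀ t₁ t₂ : f, ∀ T : ω, pre t₁ T → pre t₂ T →
      ∃ t₃, pre t₃ T ∧ le t₁ t₃ ∧ le t₂ t₃)
    (P₁ P₂ : Set ω)
    (h₁ : P₁ = cls pre P₁) (h₂ : P₂ = cls pre P₂) :
    P₁ ∪ P₂ = cls pre (P₁ ∪ P₂) := by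
  refine (subset_cls pre _).antisymm ?_
  calc cls pre (P₁ ∪ P₂) ⊆ cls pre P₁ ∪ cls pre P₂ := cls_union_subset hdown hdir P₁ P₂
    _ = P₁ ∪ P₂ := by rw [← h₁, ← h₂]
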